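/- The Diophantine equation v^2 = 60w^2 - 61w + 16 has infinitely many solutions in nonnegative integers; specifically, if (v, w) is a solution then so is (1921v + 14880w - 7564, 248v + 1921w - 976), starting from (v, w) = (4, 0). -/

import Mathlib

/-! `pellStep` is the automorphism of the form `v² - 60w² + 61w` given by the norm-one unit
`1921 + 248√60` of `ℤ[√60]`, conjugated by the translation `w ↦ w - 61/120` that centres the conic.
It fixes the value of `v² - f(w)`, so it maps solutions to solutions, and on solutions with `v ≥ 4`,
`w ≥ 0` it preserves these bounds and strictly increases `w`; its orbit of `(4, 0)` is therefore
an infinite family of nonnegative solutions. -/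

theorem Set.infinite_of_mapsTo_of_lt {α β : Type*} [Preorder β] {s : Set α} {f : α → α}
    {g : α → β} (hs : s.Nonempty) (hf : Set.MapsTo f s s) (hg : ∀ x ∈ s, g x < g (f x)) :
    s.Infinite := by
  obtain ⟨x, hx⟩ := hs
  have hmem : ∀ n, f^[n] x ∈ s := fun n => hf.iterate n hx
  have hmono : StrictMono fun n => g (f^[n] x) := strictMono_nat_of_lt_succ fun n => by
    rw [Function.iterate_succ_apply']
    exact hg _ (hmem n)
  exact Set.infinite_of_injective_forall_mem hmono.injective.of_comp hmem

namespace Pell60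

def rhs (w : ℤ) : ℤ := 60 * w ^ 2 - 61 * w + 16

def step (p : ℤ × ℤ) : ℤ × ℤ :=
  (1921 * p.1 + 14880 * p.2 - 7564, 248 * p.1 + 1921 * p.2 - 976)

theorem step_fst_sq_sub_rhs (p : ℤ × ℤ) :
    (step p).1 ^ 2 - rhs (step p).2 = p.1 ^ 2 - rhs p.2 := by
  simp only [step, rhs]
  ring

def region : Set (ℤ × ℤ) := {p | 4 ≤ p.1 ∧ 0 ≤ p.2 ∧ p.1 ^ 2 = rhs p.2}

theorem mapsTo_step_region : Set.MapsTo step region region := by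
  rintro ⟨v, w⟩ ⟨hv, hw, hsol⟩
  have hinv := step_fst_sq_sub_rhs (v, w)
  refine ⟨?_, ?_, ?_⟩
  · simp only [step]; linarith
  · simp only [step]; linarith
  · dsimp only at hsol; linarith

theorem snd_lt_step_snd {p : ℤ × ℤ} (hp : p ∈ region) : p.2 < (step p).2 := by
  obtain ⟨hv, hw, -⟩ := hp
  simp only [step]
  linarith

theorem region_infinite : region.Infinite :=
  Set.infinite_of_mapsTo_of_lt ⟨(4, 0), by norm_num [region, rhs]⟩ mapsTo_step_region
    fun _ => snd_lt_step_snd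

end Pell60

open Pell60 in
theorem pell_type_60w_infinitely_many :
    {p : ℤ × ℤ | 0 ≤ p.1 ∧ 0 ≤ p.2 ∧
      p.1 ^ 2 = 60 * p.2 ^ 2 - 61 * p.2 + 16}.Infinite ∧
    ((4 : ℤ) ^ 2 = 60 * 0 ^ 2 - 61 * 0 + 16) ∧
    (∀ v w : ℤ, v ^ 2 = 60 * w ^ 2 - 61 * w + 16 →
      (1921 * v + 14880 * w - 7564) ^ 2 =
        60 * (248 * v + 1921 * w - 976) ^ 2 - 61 * (248 * v + 1921 * w - 976) + 16) := by
  refine ⟨region_infinite.mono ?_, by norm_num, fun v w hsol => ?_⟩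
  · rintro p ⟨hv, hw, hsol⟩
    exact ⟨by linarith, hw, hsol⟩
  · have hinv := step_fst_sq_sub_rhs (v, w)
    simp only [step, rhs] at hinv
    linarith
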